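/- Let G and H be non-trivial graphs where there exist vertices u, v of G with N_G(u) ∪ N_G(v) = V(G) and H is not complete. Then tn(G ∘ H) ≤ 4. -/

import Mathlib

open SimpleGraph

/-- A walk `W` between `u` and `v` is a *tolled walk* if either `u = v` and `W` is trivial,
or `u` and `v` are adjacent and `W` is the single-edge walk, or `u ≠ v` are non-adjacent,
`W` has at least one interior vertex, `u` is adjacent exactly to the interior vertex
at position 1 and `v` exactly to the interior vertex at position `W.length - 1`. -/
def IsTolledWalk {V : Type*} (G : SimpleGraph V) {u v : V} (W : G.Walk u v) : Prop :=
  (u = v ∧ W.length = 0) ∨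
  (G.Adj u v ∧ W.support = [u, v]) ∨
  (¬ G.Adj u v ∧ u ≠ v ∧ 2 ≤ W.length ∧
    (∀ i, 0 < i → i < W.length → (G.Adj u (W.support.getD i u) ↔ i = 1)) ∧
    (∀ i, 0 < i → i < W.length → (G.Adj v (W.support.getD i u) ↔ i = W.length - 1)))

/-- The toll interval between `u` and `v`: vertices lying on some tolled walk. -/
def tollInterval {V : Type*} (G : SimpleGraph V) (u v : V) : Set V :=
  {x | ∃ W : G.Walk u v, IsTolledWalk G W ∧ x ∈ W.support}

/-- A toll set: the toll intervals between its pairs cover the vertex set. -/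
def IsTollSet {V : Type*} (G : SimpleGraph V) (S : Set V) : Prop :=
  ∀ x : V, ∃ u ∈ S, ∃ v ∈ S, x ∈ tollInterval G u v

/-- The toll number: minimum size of a toll set. -/
noncomputable def tollNumber {V : Type*} (G : SimpleGraph V) : ℕ :=
  sInf {n | ∃ S : Set V, S.Finite ∧ S.ncard = n ∧ IsTollSet G S}

/-- `v` is a cut vertex if deleting it disconnects the graph. -/
def IsCutVertex {V : Type*} (G : SimpleGraph V) (v : V) : Prop :=
  ¬ (G.induce {w | w ≠ v}).Preconnected

/-- The extreme vertices of `G` with respect to toll convexity. -/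
def extremeVertices {V : Type*} (G : SimpleGraph V) : Set V :=
  {s | ∀ x y : V, x ≠ s → y ≠ s → s ∉ tollInterval G x y}

/-- The lexicographic product of simple graphs. -/
def lexProd {V W : Type*} (G : SimpleGraph V) (H : SimpleGraph W) : SimpleGraph (V × W) where
  Adj a b := G.Adj a.1 b.1 ∨ (a.1 = b.1 ∧ H.Adj a.2 b.2)
  symm := by
    constructor
    rintro a b (h | ⟨h1, h2⟩)
    · exact Or.inl h.symm
    · exact Or.inr ⟨h1.symm, h2.symm⟩
  loopless := by
    constructor
    rintro a (h | ⟨_, h⟩)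
    · exact (G.ne_of_adj h) rfl
    · exact (H.ne_of_adj h) rfl

/-!
If every vertex of `G` has a neighbour in `D` and `h₁ ≠ h₂` are non-adjacent in `H`, then
`D × {h₁, h₂}` is a toll set of `G ∘ H`: a vertex `(g, h)` with `w ∈ D` adjacent to `g` is the
middle vertex of the tolled walk `(w, h₁), (g, h), (w, h₂)`. Vertices `u, v` whose neighbourhoods
cover `G` give such a `D` with two elements.
-/

lemma mem_tollInterval_of_adj_of_adj {V : Type*} (G : SimpleGraph V) {a b x : V}
    (hab : ¬ G.Adj a b) (hne : a ≠ b) (hax : G.Adj a x) (hbx : G.Adj b x) :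
    x ∈ tollInterval G a b := by
  refine ⟨Walk.cons hax (Walk.cons hbx.symm Walk.nil), ?_, by simp⟩
  refine Or.inr (Or.inr ⟨hab, hne, by simp, ?_, ?_⟩) <;>
  · intro i hi₀ hi
    simp only [Walk.length_cons, Walk.length_nil] at hi
    interval_cases i
    simp [hax, hbx]

lemma tollNumber_le_ncard {V : Type*} (G : SimpleGraph V) {S : Set V} (hS : S.Finite)
    (hT : IsTollSet G S) : tollNumber G ≤ S.ncard :=
  Nat.sInf_le ⟨S, hS, rfl, hT⟩

lemma mem_tollInterval_lexProd {V W : Type*} (G : SimpleGraph V) (H : SimpleGraph W)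
    {w g : V} {h₁ h₂ : W} (hwg : G.Adj w g) (hne : h₁ ≠ h₂) (hnadj : ¬ H.Adj h₁ h₂) (h : W) :
    (g, h) ∈ tollInterval (lexProd G H) (w, h₁) (w, h₂) := by
  refine mem_tollInterval_of_adj_of_adj _ ?_ (by simp [hne]) (Or.inl hwg) (Or.inl hwg)
  rintro (hw | ⟨-, hh⟩)
  · exact G.irrefl hw
  · exact hnadj hh

lemma isTollSet_lexProd_prod_pair {V W : Type*} (G : SimpleGraph V) (H : SimpleGraph W)
    {D : Set V} (hD : ∀ g, ∃ w ∈ D, G.Adj w g) {h₁ h₂ : W} (hne : h₁ ≠ h₂)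
    (hnadj : ¬ H.Adj h₁ h₂) :
    IsTollSet (lexProd G H) (D ×ˢ {h₁, h₂}) := by
  rintro ⟨g, h⟩
  obtain ⟨w, hwD, hwg⟩ := hD g
  exact ⟨(w, h₁), by simp [hwD], (w, h₂), by simp [hwD],
    mem_tollInterval_lexProd G H hwg hne hnadj h⟩

lemma tollNumber_lexProd_le {V W : Type*} (G : SimpleGraph V) (H : SimpleGraph W)
    {D : Set V} (hDfin : D.Finite) (hD : ∀ g, ∃ w ∈ D, G.Adj w g) (hH : H ≠ ⊤) :
    tollNumber (lexProd G H) ≤ 2 * D.ncard := by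
  obtain ⟨h₁, h₂, hne, hnadj⟩ := ne_top_iff_exists_not_adj.mp hH
  calc tollNumber (lexProd G H) ≤ (D ×ˢ ({h₁, h₂} : Set W)).ncard :=
        tollNumber_le_ncard _ (hDfin.prod (Set.toFinite _))
          (isTollSet_lexProd_prod_pair G H hD hne hnadj)
    _ = 2 * D.ncard := by rw [Set.ncard_prod, Set.ncard_pair hne, mul_comm]

theorem stmt12_general {V W : Type*}
    (G : SimpleGraph V) (H : SimpleGraph W)
    (hcov : ∃ u v : V, G.neighborSet u ∪ G.neighborSet v = Set.univ) (hH : H ≠ ⊤) :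
    tollNumber (lexProd G H) ≤ 4 := by
  obtain ⟨u, v, hcov⟩ := hcov
  have hD : ∀ g, ∃ w ∈ ({u, v} : Set V), G.Adj w g := by
    intro g
    rcases (hcov ▸ Set.mem_univ g : g ∈ G.neighborSet u ∪ G.neighborSet v) with hg | hg
    · exact ⟨u, by simp, hg⟩
    · exact ⟨v, by simp, hg⟩
  have hcard : ({u, v} : Set V).ncard ≤ 2 :=
    (Set.ncard_insert_le u {v}).trans (by simp)
  calc tollNumber (lexProd G H) ≤ 2 * ({u, v} : Set V).ncard :=
        tollNumber_lexProd_le G H (Set.toFinite _) hD hH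
    _ ≤ 4 := by omega

theorem stmt12 {V W : Type*} [Fintype V] [Fintype W] [Nontrivial V] [Nontrivial W]
    (G : SimpleGraph V) (H : SimpleGraph W)
    (hcov : ∃ u v : V, G.neighborSet u ∪ G.neighborSet v = Set.univ) (hH : H ≠ ⊤) :
    tollNumber (lexProd G H) ≤ 4 :=
  stmt12_general G H hcov hH
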